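/- arXiv:2306.03353 — 3 statements merged into one kernel-verified Lean document; each statement's English description precedes it below -/
import Mathlib

section
/- Let V be a Lorentzian vector space with inner product ⟨·,·⟩ of signature (-,+,...,+), and let T₁, T₂, T₃ be future-directed unit timelike vectors (so ⟨Tᵢ,Tᵢ⟩ = -1 and all pairwise inner products are negative). Then 1 ≤ -⟨T₁,T₂⟩ ≤ 2⟨T₁,T₃⟩⟨T₂,T₃⟩. -/
/-- The Minkowski inner product of signature `(-,+,...,+)` on `ℝ × ℝⁿ`. -/
noncomputable def minkowski (n : ℕ) (p q : ℝ × EuclideanSpace ℝ (Fin n)) : ℝ :=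
  -(p.1 * q.1) + (inner ℝ p.2 q.2 : ℝ)

/-!
Fix a unit timelike `T`. On its orthogonal complement the Minkowski form is positive
semidefinite, so `B_T(X, Y) = ⟨X, Y⟩ + ⟨X, T⟩⟨Y, T⟩` (the form evaluated on the projections of `X`
and `Y` to `T^⊥`) is positive semidefinite and satisfies Cauchy–Schwarz. For unit timelike `S`,
`B_T(S, S) ≥ 0` is the reversed Cauchy–Schwarz inequality `⟨S, T⟩ ≤ -1` when `⟨S, T⟩ < 0`. Taking `T = T₃`,
`a = -⟨T₁, T₃⟩ ≥ 1`, `b = -⟨T₂, T₃⟩ ≥ 1`, Cauchy–Schwarz for `B_T₃(T₁, T₂)` reads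
`(⟨T₁, T₂⟩ + ab)² ≤ (a² - 1)(b² - 1) ≤ (ab - 1)²`, which gives `1 ≤ -⟨T₁, T₂⟩ ≤ 2ab - 1`.
-/

namespace minkowski

variable {n : ℕ}

lemma comm (p q : ℝ × EuclideanSpace ℝ (Fin n)) : minkowski n p q = minkowski n q p := by
  simp only [minkowski, real_inner_comm, mul_comm]

lemma add_left (p q r : ℝ × EuclideanSpace ℝ (Fin n)) :
    minkowski n (p + q) r = minkowski n p r + minkowski n q r := by
  simp only [minkowski, Prod.fst_add, Prod.snd_add, inner_add_left]
  ring

lemma smul_left (a : ℝ) (p q : ℝ × EuclideanSpace ℝ (Fin n)) :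
    minkowski n (a • p) q = a * minkowski n p q := by
  simp only [minkowski, Prod.smul_fst, Prod.smul_snd, smul_eq_mul, real_inner_smul_left]
  ring

lemma add_right (p q r : ℝ × EuclideanSpace ℝ (Fin n)) :
    minkowski n p (q + r) = minkowski n p q + minkowski n p r := by
  rw [comm, add_left, comm q, comm r]

lemma smul_right (a : ℝ) (p q : ℝ × EuclideanSpace ℝ (Fin n)) :
    minkowski n p (a • q) = a * minkowski n p q := by
  rw [comm, smul_left, comm]

lemma self_nonneg_of_orthogonal {T X : ℝ × EuclideanSpace ℝ (Fin n)}
    (hT : minkowski n T T < 0) (hX : minkowski n T X = 0) : 0 ≤ minkowski n X X := by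
  unfold minkowski at *
  have hcs : (T.1 * X.1) ^ 2 ≤ inner ℝ T.2 T.2 * inner ℝ X.2 X.2 := by
    simpa only [sq, show inner ℝ T.2 X.2 = T.1 * X.1 by linarith]
      using real_inner_mul_inner_self_le T.2 X.2
  have hX₂ : 0 ≤ inner ℝ X.2 X.2 := real_inner_self_nonneg
  have hT₁ : 0 < T.1 * T.1 := by nlinarith [real_inner_self_nonneg (x := T.2)]
  have hscaled : T.1 * T.1 * (X.1 * X.1) ≤ T.1 * T.1 * inner ℝ X.2 X.2 := by
    nlinarith [mul_le_mul_of_nonneg_right (by linarith : inner ℝ T.2 T.2 ≤ T.1 * T.1) hX₂]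
  nlinarith [le_of_mul_le_mul_left hscaled hT₁]

lemma self_add_sq_nonneg {T : ℝ × EuclideanSpace ℝ (Fin n)} (hT : minkowski n T T = -1)
    (X : ℝ × EuclideanSpace ℝ (Fin n)) : 0 ≤ minkowski n X X + minkowski n X T ^ 2 := by
  set u := minkowski n X T
  have horth : minkowski n T (X + u • T) = 0 := by
    rw [add_right, smul_right, hT, comm]; ring
  have hproj : minkowski n (X + u • T) (X + u • T) = minkowski n X X + u ^ 2 := by
    simp only [add_left, add_right, smul_left, smul_right, comm T X, hT]
    ring
  exact hproj ▸ self_nonneg_of_orthogonal (by linarith) horth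

lemma cauchy_schwarz {T : ℝ × EuclideanSpace ℝ (Fin n)} (hT : minkowski n T T = -1)
    (X Y : ℝ × EuclideanSpace ℝ (Fin n)) :
    (minkowski n X Y + minkowski n X T * minkowski n Y T) ^ 2 ≤
      (minkowski n X X + minkowski n X T ^ 2) * (minkowski n Y Y + minkowski n Y T ^ 2) := by
  have hquad : ∀ l : ℝ, 0 ≤ (minkowski n Y Y + minkowski n Y T ^ 2) * (l * l)
      + 2 * (minkowski n X Y + minkowski n X T * minkowski n Y T) * l
      + (minkowski n X X + minkowski n X T ^ 2) := by
    intro l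
    have hl := self_add_sq_nonneg hT (X + l • Y)
    simp only [add_left, add_right, smul_left, smul_right, comm Y X] at hl
    linarith
  have hdisc := discrim_le_zero hquad
  unfold discrim at hdisc
  nlinarith

lemma le_neg_one_of_neg {S T : ℝ × EuclideanSpace ℝ (Fin n)} (hS : minkowski n S S = -1)
    (hT : minkowski n T T = -1) (hST : minkowski n S T < 0) : minkowski n S T ≤ -1 := by
  nlinarith [self_add_sq_nonneg hT S]

end minkowski

theorem stmt0_general (n : ℕ) (T₁ T₂ T₃ : ℝ × EuclideanSpace ℝ (Fin n))
    (h1 : minkowski n T₁ T₁ = -1) (h2 : minkowski n T₂ T₂ = -1)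
    (h3 : minkowski n T₃ T₃ = -1)
    (h13 : minkowski n T₁ T₃ < 0)
    (h23 : minkowski n T₂ T₃ < 0) :
    1 ≤ -(minkowski n T₁ T₂) ∧
      -(minkowski n T₁ T₂) ≤ 2 * minkowski n T₁ T₃ * minkowski n T₂ T₃ := by
  have ha := minkowski.le_neg_one_of_neg h1 h3 h13
  have hb := minkowski.le_neg_one_of_neg h2 h3 h23
  have hcs := minkowski.cauchy_schwarz h3 T₁ T₂
  rw [h1, h2] at hcs
  set a := minkowski n T₁ T₃
  set b := minkowski n T₂ T₃
  have hcs' : (minkowski n T₁ T₂ + a * b) ^ 2 ≤ (a * b - 1) ^ 2 := by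
    nlinarith [sq_nonneg (a - b)]
  have hbounds := abs_le_of_sq_le_sq' hcs' (by nlinarith)
  constructor <;> linarith [hbounds.1, hbounds.2]

/-- Bartnik's Lemma 3.3: if `T₁, T₂, T₃` are future-directed unit timelike vectors
(unit timelike, mutually in the same time cone, i.e. pairwise inner products are
negative), then `1 ≤ -⟨T₁,T₂⟩ ≤ 2⟨T₁,T₃⟩⟨T₂,T₃⟩`. -/
theorem stmt0 (n : ℕ) (T₁ T₂ T₃ : ℝ × EuclideanSpace ℝ (Fin n))
    (h1 : minkowski n T₁ T₁ = -1) (h2 : minkowski n T₂ T₂ = -1)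
    (h3 : minkowski n T₃ T₃ = -1)
    (h12 : minkowski n T₁ T₂ < 0) (h13 : minkowski n T₁ T₃ < 0)
    (h23 : minkowski n T₂ T₃ < 0) :
    1 ≤ -(minkowski n T₁ T₂) ∧
      -(minkowski n T₁ T₂) ≤ 2 * minkowski n T₁ T₃ * minkowski n T₂ T₃ :=
  stmt0_general n T₁ T₂ T₃ h1 h2 h3 h13 h23
end

section
/- Let h = 1-2ms with 0 < s < 1/(2m), and suppose Q: S² × (0,s₀) → ℝ is C¹ and satisfies (for all small s) the two inequalities: (i) -(1+O(s²))Q_s - (ε+O(s²))|∇Q|²_{S²} ≤ C₇(ε) for ε = 1/8, and (ii) (2+O(s³))Q_s + (s²h+O(s³))Q_s² + (1+O(s³))|∇Q|²_{S²} ≤ C₈. Then there exist s₁ > 0 and C₉ > 0 such that |Q_s| ≤ C₉ and |∇Q|²_{S²} ≤ C₉ on S² × (0,s₁); i.e., Q is uniformly Lipschitz near s = 0. -/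
/-!
Adding a quarter of (ii) to (i) cancels most of the `Q_s` term in (i) while keeping a
nonnegative multiple of `|∇Q|²`, so `-Q_s` is bounded above. Dropping the nonnegative
terms of (ii) bounds `Q_s` above, and once `Q_s` is bounded below, (ii) bounds `|∇Q|²`.
For small `s` every error coefficient is at most `1/16` in absolute value and the
coefficient `s²h + e₄` of `Q_s²` is nonnegative, which is all the argument needs.
-/

open Filter Topology

section PerturbedInequalities

variable {x g a₁ a₂ a₃ a₅ C₇ C₈ : ℝ}

lemma neg_le_of_perturbed_ineqs (hg : 0 ≤ g) (ha₁ : |a₁| ≤ 1/16) (ha₂ : |a₂| ≤ 1/16)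
    (ha₃ : |a₃| ≤ 1/16) (ha₅ : |a₅| ≤ 1/16)
    (hi : -((1 + a₁) * x) - (1/8 + a₂) * g ≤ C₇) (hii : (2 + a₃) * x + (1 + a₅) * g ≤ C₈) :
    -(4 * (|C₇| + |C₈|)) ≤ x := by
  rw [abs_le] at ha₁ ha₂ ha₃ ha₅
  have hcomb : -((1/2 + a₁ - a₃/4) * x) + (1/8 - a₂ + a₅/4) * g ≤ C₇ + C₈/4 := by linarith
  have hgrad : 0 ≤ (1/8 - a₂ + a₅/4) * g := mul_nonneg (by linarith) hg
  rcases le_or_gt 0 x with hx | hx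
  · linarith [abs_nonneg C₇, abs_nonneg C₈]
  · have hQs : 1/4 * -x ≤ (1/2 + a₁ - a₃/4) * -x :=
      mul_le_mul_of_nonneg_right (by linarith) (by linarith)
    linarith [le_abs_self C₇, le_abs_self C₈, abs_nonneg C₈]

lemma le_abs_of_perturbed_ineq (hg : 0 ≤ g) (ha₃ : |a₃| ≤ 1/16) (ha₅ : |a₅| ≤ 1/16)
    (hii : (2 + a₃) * x + (1 + a₅) * g ≤ C₈) :
    x ≤ |C₈| := by
  rw [abs_le] at ha₃ ha₅
  have hgrad : 0 ≤ (1 + a₅) * g := mul_nonneg (by linarith) hg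
  rcases le_or_gt x 0 with hx | hx
  · linarith [abs_nonneg C₈]
  · have hQs : 1 * x ≤ (2 + a₃) * x := mul_le_mul_of_nonneg_right (by linarith) hx.le
    linarith [le_abs_self C₈]

lemma bounds_of_perturbed_ineqs (hg : 0 ≤ g) (ha₁ : |a₁| ≤ 1/16) (ha₂ : |a₂| ≤ 1/16)
    (ha₃ : |a₃| ≤ 1/16) (ha₅ : |a₅| ≤ 1/16)
    (hi : -((1 + a₁) * x) - (1/8 + a₂) * g ≤ C₇) (hii : (2 + a₃) * x + (1 + a₅) * g ≤ C₈) :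
    |x| ≤ 26 * (|C₇| + |C₈|) + 1 ∧ g ≤ 26 * (|C₇| + |C₈|) + 1 := by
  have hlow := neg_le_of_perturbed_ineqs hg ha₁ ha₂ ha₃ ha₅ hi hii
  have hup := le_abs_of_perturbed_ineq hg ha₃ ha₅ hii
  have hC : 0 ≤ |C₇| + |C₈| := by positivity
  rw [abs_le] at ha₃ ha₅
  have hQs : (2 + a₃) * -(4 * (|C₇| + |C₈|)) ≤ (2 + a₃) * x :=
    mul_le_mul_of_nonneg_left hlow (by linarith)
  have hcoef : (2 + a₃) * (4 * (|C₇| + |C₈|)) ≤ 3 * (4 * (|C₇| + |C₈|)) :=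
    mul_le_mul_of_nonneg_right (by linarith) (by positivity)
  have hgrad : 1/2 * g ≤ (1 + a₅) * g := mul_le_mul_of_nonneg_right (by linarith) hg
  refine ⟨abs_le.2 ⟨by linarith, by linarith [abs_nonneg C₇]⟩, ?_⟩
  linarith [le_abs_self C₈, abs_nonneg C₇]

end PerturbedInequalities

lemma exists_forall_small_errors (m K : ℝ) {s₀ : ℝ} (hs₀ : 0 < s₀) :
    ∃ s₁ > 0, ∀ s, 0 < s → s < s₁ →
      s < s₀ ∧ K * s^2 ≤ 1/16 ∧ K * s^3 ≤ 1/16 ∧ K * s^3 ≤ s^2 * (1 - 2*m*s) := by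
  have hsmall : ∀ᶠ s in 𝓝 (0:ℝ),
      s < s₀ ∧ K * s^2 < 1/16 ∧ K * s^3 < 1/16 ∧ (2*m + K) * s < 1 := by
    have h₂ : ∀ᶠ s in 𝓝 (0:ℝ), K * s^2 < 1/16 :=
      (by fun_prop : Continuous fun s : ℝ => K * s^2).continuousAt.eventually_lt
        continuousAt_const (by norm_num)
    have h₃ : ∀ᶠ s in 𝓝 (0:ℝ), K * s^3 < 1/16 :=
      (by fun_prop : Continuous fun s : ℝ => K * s^3).continuousAt.eventually_lt
        continuousAt_const (by norm_num)
    have hm : ∀ᶠ s in 𝓝 (0:ℝ), (2*m + K) * s < 1 :=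
      (by fun_prop : Continuous fun s : ℝ => (2*m + K) * s).continuousAt.eventually_lt
        continuousAt_const (by norm_num)
    exact (eventually_lt_nhds hs₀).and (h₂.and (h₃.and hm))
  obtain ⟨s₁, hs₁, hball⟩ := Metric.eventually_nhds_iff.1 hsmall
  refine ⟨s₁, hs₁, fun s hs hss₁ => ?_⟩
  obtain ⟨hss₀, hK₂, hK₃, hm⟩ := hball (by rwa [Real.dist_0_eq_abs, abs_of_pos hs])
  refine ⟨hss₀, hK₂.le, hK₃.le, ?_⟩
  nlinarith [mul_nonneg (sq_nonneg s) (sub_nonneg.2 hm.le)]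

theorem stmt14_general (m s₀ K C₇ C₈ : ℝ) (hs₀ : 0 < s₀)
    (Qs G : (Metric.sphere (0 : EuclideanSpace ℝ (Fin 3)) 1) → ℝ → ℝ)
    (hG : ∀ y s, 0 ≤ G y s)
    (e₁ e₂ e₃ e₄ e₅ : (Metric.sphere (0 : EuclideanSpace ℝ (Fin 3)) 1) → ℝ → ℝ)
    (hbd1 : ∀ y s, 0 < s → s < s₀ → |e₁ y s| ≤ K * s^2 ∧ |e₂ y s| ≤ K * s^2)
    (hbd2 : ∀ y s, 0 < s → s < s₀ →
      |e₃ y s| ≤ K * s^3 ∧ |e₄ y s| ≤ K * s^3 ∧ |e₅ y s| ≤ K * s^3)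
    (hi : ∀ y s, 0 < s → s < s₀ →
      -((1 + e₁ y s) * Qs y s) - (1/8 + e₂ y s) * G y s ≤ C₇)
    (hii : ∀ y s, 0 < s → s < s₀ →
      (2 + e₃ y s) * Qs y s + (s^2 * (1 - 2*m*s) + e₄ y s) * (Qs y s)^2
        + (1 + e₅ y s) * G y s ≤ C₈) :
    ∃ s₁ > (0:ℝ), ∃ C₉ > (0:ℝ), ∀ y s, 0 < s → s < s₁ →
      |Qs y s| ≤ C₉ ∧ G y s ≤ C₉ := by
  obtain ⟨s₁, hs₁, hsmall⟩ := exists_forall_small_errors m K hs₀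
  refine ⟨s₁, hs₁, 26 * (|C₇| + |C₈|) + 1, by positivity, fun y s hs hss₁ => ?_⟩
  obtain ⟨hss₀, hK₂, hK₃, hquad⟩ := hsmall s hs hss₁
  obtain ⟨he₁, he₂⟩ := hbd1 y s hs hss₀
  obtain ⟨he₃, he₄, he₅⟩ := hbd2 y s hs hss₀
  have hQs₂ : 0 ≤ (s^2 * (1 - 2*m*s) + e₄ y s) * (Qs y s)^2 :=
    mul_nonneg (by linarith [neg_abs_le (e₄ y s)]) (sq_nonneg _)
  exact bounds_of_perturbed_ineqs (hG y s) (he₁.trans hK₂) (he₂.trans hK₂) (he₃.trans hK₃)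
    (he₅.trans hK₃) (hi y s hs hss₀) (by linarith [hii y s hs hss₀])

/-- The analytic core of the Lipschitz regularity theorem (Theorem 5.1 of the
paper).  Here `Qs y s` stands for `∂_sQ(y,s)` and `G y s` for `|∇Q|²_{S²}(y,s)
≥ 0` for a `C¹` function `Q` on `S² × (0,s₀)`, `h = 1-2ms`, and `e₁,…,e₅` are
the `O(s²)` resp. `O(s³)` error terms.  Assume, for all `y ∈ S²`, `0 < s < s₀`:
(i)  `-(1+e₁)Q_s - (1/8+e₂)|∇Q|² ≤ C₇`  with `|e₁|,|e₂| ≤ Ks²`, and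
(ii) `(2+e₃)Q_s + (s²h+e₄)Q_s² + (1+e₅)|∇Q|² ≤ C₈`  with `|e₃|,|e₄|,|e₅| ≤ Ks³`.
Then there are `s₁ > 0`, `C₉ > 0` with `|Q_s| ≤ C₉` and `|∇Q|² ≤ C₉` on
`S² × (0,s₁)`; i.e. `Q` is uniformly Lipschitz near `s = 0`. -/
theorem stmt14 (m s₀ K C₇ C₈ : ℝ) (hm : 0 < m) (hs₀ : 0 < s₀) (hK : 0 ≤ K)
    (Qs G : (Metric.sphere (0 : EuclideanSpace ℝ (Fin 3)) 1) → ℝ → ℝ)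
    (hG : ∀ y s, 0 ≤ G y s)
    (e₁ e₂ e₃ e₄ e₅ : (Metric.sphere (0 : EuclideanSpace ℝ (Fin 3)) 1) → ℝ → ℝ)
    (hbd1 : ∀ y s, 0 < s → s < s₀ → |e₁ y s| ≤ K * s^2 ∧ |e₂ y s| ≤ K * s^2)
    (hbd2 : ∀ y s, 0 < s → s < s₀ →
      |e₃ y s| ≤ K * s^3 ∧ |e₄ y s| ≤ K * s^3 ∧ |e₅ y s| ≤ K * s^3)
    (hi : ∀ y s, 0 < s → s < s₀ →
      -((1 + e₁ y s) * Qs y s) - (1/8 + e₂ y s) * G y s ≤ C₇)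
    (hii : ∀ y s, 0 < s → s < s₀ →
      (2 + e₃ y s) * Qs y s + (s^2 * (1 - 2*m*s) + e₄ y s) * (Qs y s)^2
        + (1 + e₅ y s) * G y s ≤ C₈) :
    ∃ s₁ > (0:ℝ), ∃ C₉ > (0:ℝ), ∀ y s, 0 < s → s < s₁ →
      |Qs y s| ≤ C₉ ∧ G y s ≤ C₉ :=
  stmt14_general m s₀ K C₇ C₈ hs₀ Qs G hG e₁ e₂ e₃ e₄ e₅ hbd1 hbd2 hi hii
end

section
/- In the asymptotically Schwarzschild setting with metric G = ω^{-2}(ḡ + p), ω = s(1+O(s³)), p_{ab} = O(s³), and coordinates t = v + r_*, x^i (spherical), the ∂/∂t direction is timelike for s small, the lapse of the time function t satisfies α̃ = 1 + O(s), the shift covector satisfies β_i = O(s), and the induced metric on slices t = constant satisfies G_{ij} = δ_{ij} + O(s). -/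
/-!
Write `G = ω⁻² (ḡ + p)` and `r = ω / s = 1 + O(s³)`. In the frame `(∂_{y¹}, ∂_{y²}, ∂_s, ∂_v)`
we have `∂_t = ∂_v`, `ḡ(∂_t, ∂_t) = -s²(1 - 2ms)`, `ḡ(∂_t, ∂_{x^i}) = 0`, and by the chart identity
`ḡ(∂_{x^i}, ∂_{x^j}) = s² (δ_{ij} + x̂_i x̂_j ((1 - 2ms)⁻¹ - 1))`. These frame vectors have bounded
components, so every contribution of `p` is `O(s³)`, hence `O(s)` after multiplication by
`ω⁻² = r⁻² s⁻²`.

For the lapse, `w = -(1 - 2ms)⁻¹ ∂_v` satisfies `ḡ w = s² dt`, and for symmetric `ḡ` this gives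
`s⁴ (dt · (ḡ + p)⁻¹ dt) = ḡ(w, w) - w · p (ḡ + p)⁻¹ (s² dt)` with `ḡ(w, w) = -s² (1 - 2ms)⁻¹`.
The inverse `(ḡ + p)⁻¹` stays bounded because `ḡ + p` tends to the invertible matrix `ḡ|_{s=0}`,
so `α̃⁻² = r² ((1 - 2ms)⁻¹ + O(s)) = 1 + O(s)`.
-/

open Matrix Filter Asymptotics Topology

section Bilinear

variable {n R : Type*} [Fintype n]

theorem sum_sum_mul_mul_eq_dotProduct_mulVec [CommSemiring R] (B : Matrix n n R)
    (x y : n → R) : ∑ a, ∑ b, B a b * x a * y b = x ⬝ᵥ (B *ᵥ y) := by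
  simp only [dotProduct, mulVec, Finset.mul_sum]
  exact Finset.sum_congr rfl fun a _ => Finset.sum_congr rfl fun b _ => by ring

theorem sum_sum_smul_add_mul_mul [CommSemiring R] (k : R) (A E : Matrix n n R)
    (x y : n → R) :
    ∑ a, ∑ b, (k • (A + E)) a b * x a * y b = k * (x ⬝ᵥ (A *ᵥ y) + x ⬝ᵥ (E *ᵥ y)) := by
  rw [sum_sum_mul_mul_eq_dotProduct_mulVec, smul_mulVec, add_mulVec, dotProduct_smul,
    dotProduct_add, smul_eq_mul]

theorem dotProduct_add_inv_mulVec_of_mulVec_eq [DecidableEq n] [CommRing R]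
    {A E : Matrix n n R} (hA : A.IsSymm) (hAE : IsUnit (A + E).det) {w y : n → R}
    (hw : A *ᵥ w = y) :
    y ⬝ᵥ ((A + E)⁻¹ *ᵥ y) = w ⬝ᵥ (A *ᵥ w) - w ⬝ᵥ (E *ᵥ ((A + E)⁻¹ *ᵥ y)) := by
  have hz : (A + E) *ᵥ ((A + E)⁻¹ *ᵥ y) = y := by
    rw [mulVec_mulVec, mul_nonsing_inv _ hAE, one_mulVec]
  generalize (A + E)⁻¹ *ᵥ y = z at hz ⊢
  have hsymm : y ⬝ᵥ z = w ⬝ᵥ (A *ᵥ z) := by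
    rw [← hw, dotProduct_comm, dotProduct_mulVec, ← mulVec_transpose, hA.eq, dotProduct_comm]
  have hAz : A *ᵥ z = A *ᵥ w - E *ᵥ z := by
    rw [hw, ← hz, add_mulVec, add_sub_cancel_right]
  rw [hsymm, hAz, dotProduct_sub]

end Bilinear

section Asymptotics

variable {α n m : Type*} [Fintype n] [Fintype m] {l : Filter α}

theorem Asymptotics.IsBigO.dotProduct {u v : α → n → ℝ} {f g : α → ℝ} (hu : u =O[l] f)
    (hv : v =O[l] g) : (fun t => u t ⬝ᵥ v t) =O[l] fun t => f t * g t := by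
  simp only [_root_.dotProduct]
  exact IsBigO.fun_sum fun i _ => (isBigO_pi.1 hu i).mul (isBigO_pi.1 hv i)

theorem Asymptotics.IsBigO.mulVec {A : α → Matrix m n ℝ} {v : α → n → ℝ} {f g : α → ℝ}
    (hA : ∀ i j, (fun t => A t i j) =O[l] f) (hv : v =O[l] g) :
    (fun t => A t *ᵥ v t) =O[l] fun t => f t * g t :=
  isBigO_pi.2 fun i => (isBigO_pi.2 (hA i)).dotProduct hv

theorem Asymptotics.IsBigO.sumElim {E : Type*} [SeminormedAddCommGroup E] {u : α → n → E}
    {v : α → m → E} {g : α → ℝ} (hu : u =O[l] g) (hv : v =O[l] g) :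
    (fun t => Sum.elim (u t) (v t)) =O[l] g :=
  isBigO_pi.2 fun
    | .inl a => isBigO_pi.1 hu a
    | .inr b => isBigO_pi.1 hv b

theorem Asymptotics.isBigO_mul_of_isBigO_one {u f g : α → ℝ} (hu : u =O[l] fun _ => (1 : ℝ))
    (hf : f =O[l] g) : (fun t => u t * f t) =O[l] g := by
  simpa using hu.mul hf

theorem DifferentiableAt.isBigO_comp_sub {φ : ℝ → ℝ} {x₀ : ℝ} (hφ : DifferentiableAt ℝ φ x₀)
    {r g : α → ℝ} (hr : (fun t => r t - x₀) =O[l] g) (hg : Tendsto g l (𝓝 0)) :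
    (fun t => φ (r t) - φ x₀) =O[l] g := by
  have hrx : Tendsto r l (𝓝 x₀) := by
    simpa using (hr.trans_tendsto hg).add_const x₀
  exact (hφ.isBigO_sub.comp_tendsto hrx).trans hr

theorem Filter.Tendsto.matrix_inv [DecidableEq n] {𝕜 : Type*} [NormedField 𝕜]
    {A : α → Matrix n n 𝕜} {A₀ : Matrix n n 𝕜} (hA : Tendsto A l (𝓝 A₀)) (h : A₀.det ≠ 0) :
    Tendsto (fun t => (A t)⁻¹) l (𝓝 A₀⁻¹) := by
  refine (continuousAt_matrix_inv A₀ ?_).tendsto.comp hA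
  rw [Ring.inverse_eq_inv']
  exact continuousAt_inv₀ h

end Asymptotics

section RightOfZero

theorem tendsto_id_nhdsGT_zero : Tendsto (id : ℝ → ℝ) (𝓝[>] 0) (𝓝 0) :=
  tendsto_nhdsWithin_of_tendsto_nhds tendsto_id

theorem isBigO_pow_of_abs_le {f : ℝ → ℝ} {K : ℝ} {k : ℕ} (hf : ∀ s, |f s| ≤ K * s ^ k) :
    f =O[𝓝[>] 0] (· ^ k) :=
  IsBigO.of_bound K <| eventually_of_mem self_mem_nhdsWithin fun s (hs : 0 < s) => by
    rw [Real.norm_eq_abs, Real.norm_eq_abs, abs_of_pos (pow_pos hs k)]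
    exact hf s

theorem isBigO_pow_id_nhdsGT_zero {k : ℕ} (hk : 1 < k) : (· ^ k : ℝ → ℝ) =O[𝓝[>] 0] id := by
  have := ((isLittleO_pow_pow (𝕜 := ℝ) hk).isBigO).mono (nhdsWithin_le_nhds (s := Set.Ioi 0))
  simp only [pow_one] at this
  exact this

theorem isBigO_one_of_continuousAt {E : Type*} [SeminormedAddCommGroup E] {f : ℝ → E}
    (hf : ContinuousAt f 0) : f =O[𝓝[>] 0] fun _ => (1 : ℝ) :=
  (hf.tendsto.mono_left nhdsWithin_le_nhds).isBigO_one ℝ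

theorem isBigO_inv_sq_mul_dotProduct_mulVec {n : Type*} [Fintype n] {p : ℝ → Matrix n n ℝ}
    (hp : ∀ a b, (fun s => p s a b) =O[𝓝[>] 0] (· ^ 3)) {u v : ℝ → n → ℝ}
    (hu : u =O[𝓝[>] 0] fun _ => (1 : ℝ)) (hv : v =O[𝓝[>] 0] fun _ => (1 : ℝ)) :
    (fun s => (s ^ 2)⁻¹ * (u s ⬝ᵥ (p s *ᵥ v s))) =O[𝓝[>] 0] id := by
  refine ((isBigO_refl (fun s : ℝ => (s ^ 2)⁻¹) _).mul
    (hu.dotProduct (IsBigO.mulVec hp hv))).trans_eventuallyEq ?_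
  filter_upwards [self_mem_nhdsWithin] with s (hs : 0 < s)
  field_simp
  simp

theorem exists_forall_of_eventually_of_isBigO {E : Type*} [SeminormedAddCommGroup E]
    {P : ℝ → Prop} {F : ℝ → E} (hP : ∀ᶠ s in 𝓝[>] 0, P s) (hF : F =O[𝓝[>] 0] id) :
    ∃ s₀ > (0 : ℝ), ∃ C > (0 : ℝ), ∀ s, 0 < s → s < s₀ → P s ∧ ‖F s‖ ≤ C * s := by
  obtain ⟨C, hC⟩ := hF.bound
  obtain ⟨s₀, hs₀, hsub⟩ := mem_nhdsGT_iff_exists_Ioo_subset.1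
    (hP.and (hC.and self_mem_nhdsWithin))
  refine ⟨s₀, hs₀, max C 1, by positivity, fun s hs hss => ?_⟩
  obtain ⟨hPs, hFs, -⟩ := hsub ⟨hs, hss⟩
  refine ⟨hPs, hFs.trans ?_⟩
  rw [id, Real.norm_of_nonneg hs.le]
  exact mul_le_mul_of_nonneg_right (le_max_left _ _) hs.le

theorem eventually_one_sub_mul_ne_zero (m : ℝ) : ∀ᶠ s in 𝓝[>] 0, 1 - 2 * m * s ≠ 0 :=
  (((by fun_prop : Continuous fun s : ℝ => 1 - 2 * m * s).tendsto 0).eventually_ne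
    (by simp)).filter_mono nhdsWithin_le_nhds

theorem isBigO_inv_one_sub_mul_sub_one (m : ℝ) :
    (fun s : ℝ => (1 - 2 * m * s)⁻¹ - 1) =O[𝓝[>] 0] id := by
  have hφ : DifferentiableAt ℝ (fun s : ℝ => (1 - 2 * m * s)⁻¹) 0 := by
    fun_prop (disch := norm_num)
  simpa using hφ.isBigO_comp_sub (r := id) (by simp only [sub_zero]; exact isBigO_refl _ _)
    tendsto_id_nhdsGT_zero

variable {ω : ℝ → ℝ}

theorem isBigO_div_id_sub_one {K : ℝ} (hω : ∀ s, |ω s - s| ≤ K * s ^ 4) :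
    (fun s => ω s / s - 1) =O[𝓝[>] 0] id := by
  have h3 : (fun s => ω s / s - 1) =O[𝓝[>] 0] (· ^ 3) := by
    refine IsBigO.of_bound K <| eventually_of_mem self_mem_nhdsWithin fun s (hs : 0 < s) => ?_
    have : ω s / s - 1 = (ω s - s) / s := by field_simp
    rw [this, Real.norm_eq_abs, Real.norm_eq_abs, abs_div, abs_of_pos hs,
      abs_of_pos (pow_pos hs 3), div_le_iff₀ hs]
    calc |ω s - s| ≤ K * s ^ 4 := hω s
      _ = K * s ^ 3 * s := by ring
  exact h3.trans (isBigO_pow_id_nhdsGT_zero (by norm_num))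

theorem tendsto_div_id_of_isBigO (hω : (fun s => ω s / s - 1) =O[𝓝[>] 0] id) :
    Tendsto (fun s => ω s / s) (𝓝[>] 0) (𝓝 1) := by
  simpa using (hω.trans_tendsto tendsto_id_nhdsGT_zero).add_const 1

theorem eventually_ne_zero_of_isBigO (hω : (fun s => ω s / s - 1) =O[𝓝[>] 0] id) :
    ∀ᶠ s in 𝓝[>] 0, ω s ≠ 0 :=
  ((tendsto_div_id_of_isBigO hω).eventually_ne one_ne_zero).mono fun _ h => left_ne_zero_of_mul h

end RightOfZero

section Schwarzschild

/-- `ḡ` in the frame `(∂_{y¹}, ∂_{y²}, ∂_s, ∂_v)`, indexed by `Fin 2 ⊕ Fin 2`. -/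
def gBar (σ : Matrix (Fin 2) (Fin 2) ℝ) (m s : ℝ) : Matrix (Fin 2 ⊕ Fin 2) (Fin 2 ⊕ Fin 2) ℝ :=
  fromBlocks σ 0 0 !![0, 1; 1, -(s ^ 2 * (1 - 2 * m * s))]

variable {σ : Matrix (Fin 2) (Fin 2) ℝ}

theorem sumElim_dotProduct_gBar_mulVec_sumElim (m s : ℝ) (x y : Fin 2 → ℝ) (a b a' b' : ℝ) :
    Sum.elim x ![a, b] ⬝ᵥ (gBar σ m s *ᵥ Sum.elim y ![a', b'])
      = x ⬝ᵥ (σ *ᵥ y) + (a * b' + b * a' - s ^ 2 * (1 - 2 * m * s) * b * b') := by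
  simp [gBar, dotProduct, mulVec, Fin.sum_univ_two]
  ring

theorem gBar_isSymm (hσ : σ.IsSymm) (m s : ℝ) : (gBar σ m s).IsSymm :=
  hσ.fromBlocks (by simp) (by ext i j; fin_cases i <;> fin_cases j <;> rfl)

theorem continuous_gBar (m : ℝ) : Continuous (gBar σ m) := by
  unfold gBar
  fun_prop

theorem det_gBar_zero (m : ℝ) : (gBar σ m 0).det = -σ.det := by
  simp [gBar, det_fromBlocks_zero₂₁, det_fin_two]

variable {p : ℝ → Matrix (Fin 2 ⊕ Fin 2) (Fin 2 ⊕ Fin 2) ℝ}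

theorem tendsto_gBar_add {m : ℝ} (hp : ∀ a b, (fun s => p s a b) =O[𝓝[>] 0] (· ^ 3)) :
    Tendsto (fun s => gBar σ m s + p s) (𝓝[>] 0) (𝓝 (gBar σ m 0)) := by
  have hp0 : Tendsto p (𝓝[>] 0) (𝓝 0) := by
    refine tendsto_pi_nhds.2 fun a => tendsto_pi_nhds.2 fun b => (hp a b).trans_tendsto ?_
    simpa using tendsto_id_nhdsGT_zero.pow 3
  simpa using ((continuous_gBar m).tendsto 0).mono_left nhdsWithin_le_nhds |>.add hp0

theorem isBigO_one_frame {c : ℝ → Fin 2 → ℝ} {K : ℝ} (hc : ∀ s A, |c s A| ≤ K * s) (x m : ℝ) :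
    (fun s => Sum.elim (c s) ![-x * s ^ 2, -x * (1 - 2 * m * s)⁻¹]) =O[𝓝[>] 0]
      fun _ => (1 : ℝ) := by
  have hc1 : c =O[𝓝[>] 0] fun _ => (1 : ℝ) := by
    refine isBigO_pi.2 fun A => (isBigO_pow_of_abs_le (k := 1) (by simpa using (hc · A))).trans ?_
    exact isBigO_one_of_continuousAt (by fun_prop)
  exact hc1.sumElim (isBigO_one_of_continuousAt (by fun_prop (disch := norm_num)))

theorem inv_lapse_sq_eq (hσ : σ.IsSymm) {m s ω : ℝ}
    {P : Matrix (Fin 2 ⊕ Fin 2) (Fin 2 ⊕ Fin 2) ℝ} (hs : s ≠ 0) (hh : 1 - 2 * m * s ≠ 0)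
    (hω : ω ≠ 0) (hP : IsUnit (gBar σ m s + P).det) :
    -(∑ a, ∑ b, (((ω ^ 2)⁻¹ • (gBar σ m s + P))⁻¹ a b
        * Sum.elim (0 : Fin 2 → ℝ) ![-((s⁻¹) ^ 2 * (1 - 2 * m * s)⁻¹), 1] a
        * Sum.elim (0 : Fin 2 → ℝ) ![-((s⁻¹) ^ 2 * (1 - 2 * m * s)⁻¹), 1] b))
      = (ω / s) ^ 2 * ((1 - 2 * m * s)⁻¹ + (s ^ 2)⁻¹
          * (Sum.elim (0 : Fin 2 → ℝ) ![0, -(1 - 2 * m * s)⁻¹] ⬝ᵥ (P *ᵥ ((gBar σ m s + P)⁻¹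
            *ᵥ Sum.elim (0 : Fin 2 → ℝ) ![-(1 - 2 * m * s)⁻¹, s ^ 2])))) := by
  have hinv : ((ω ^ 2)⁻¹ • (gBar σ m s + P))⁻¹ = ω ^ 2 • (gBar σ m s + P)⁻¹ :=
    inv_eq_left_inv <| by
      rw [smul_mul_smul_comm, mul_inv_cancel₀ (pow_ne_zero 2 hω), one_smul, nonsing_inv_mul _ hP]
  have hdt : Sum.elim (0 : Fin 2 → ℝ) ![-((s⁻¹) ^ 2 * (1 - 2 * m * s)⁻¹), 1]
      = (s ^ 2)⁻¹ • Sum.elim (0 : Fin 2 → ℝ) ![-(1 - 2 * m * s)⁻¹, s ^ 2] := by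
    ext (a | a) <;> fin_cases a <;> simp [hs]
  have hw : gBar σ m s *ᵥ Sum.elim (0 : Fin 2 → ℝ) ![0, -(1 - 2 * m * s)⁻¹]
      = Sum.elim (0 : Fin 2 → ℝ) ![-(1 - 2 * m * s)⁻¹, s ^ 2] := by
    ext (a | a) <;> fin_cases a <;> simp [gBar, mulVec, dotProduct, hh]
  rw [sum_sum_mul_mul_eq_dotProduct_mulVec, hinv, hdt]
  simp only [smul_mulVec, mulVec_smul, smul_dotProduct, dotProduct_smul, smul_eq_mul]
  rw [dotProduct_add_inv_mulVec_of_mulVec_eq (gBar_isSymm hσ m s) hP hw,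
    sumElim_dotProduct_gBar_mulVec_sumElim, zero_dotProduct]
  field_simp
  ring

variable (m : ℝ) {ω : ℝ → ℝ}

theorem eventually_timelike (hp : ∀ a b, (fun s => p s a b) =O[𝓝[>] 0] (· ^ 3))
    (hω : (fun s => ω s / s - 1) =O[𝓝[>] 0] id) :
    ∀ᶠ s in 𝓝[>] 0, ∑ a, ∑ b, (((ω s) ^ 2)⁻¹ • (gBar σ m s + p s)) a b
      * Sum.elim (0 : Fin 2 → ℝ) ![0, 1] a * Sum.elim (0 : Fin 2 → ℝ) ![0, 1] b < 0 := by
  have hpvv := ((hp (.inr 1) (.inr 1)).trans_isLittleO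
    ((isLittleO_pow_pow (𝕜 := ℝ) (by norm_num : 2 < 3)).mono nhdsWithin_le_nhds)).def
    (by norm_num : (0 : ℝ) < 1 / 2)
  have hh : ∀ᶠ s in 𝓝[>] 0, 1 / 2 < 1 - 2 * m * s :=
    (((by fun_prop : Continuous fun s : ℝ => 1 - 2 * m * s).tendsto 0).eventually
      (lt_mem_nhds (by norm_num))).filter_mono nhdsWithin_le_nhds
  filter_upwards [self_mem_nhdsWithin, hpvv, hh, eventually_ne_zero_of_isBigO hω]
    with s (hs : 0 < s) hps hhs hωs
  rw [sum_sum_smul_add_mul_mul, sumElim_dotProduct_gBar_mulVec_sumElim]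
  simp only [Real.norm_eq_abs, abs_pow, abs_of_pos hs] at hps
  simp [dotProduct, mulVec, Fin.sum_univ_two]
  refine mul_neg_of_pos_of_neg (by positivity) ?_
  nlinarith [le_abs_self (p s (.inr 1) (.inr 1)), pow_pos hs 2]

theorem isBigO_lapse_sub_one (hp : ∀ a b, (fun s => p s a b) =O[𝓝[>] 0] (· ^ 3))
    (hω : (fun s => ω s / s - 1) =O[𝓝[>] 0] id)
    (hσ : σ.IsSymm) (hσ0 : σ.det ≠ 0) :
    (fun s => (√(-(∑ a, ∑ b, (((ω s) ^ 2)⁻¹ • (gBar σ m s + p s))⁻¹ a b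
        * Sum.elim (0 : Fin 2 → ℝ) ![-((s⁻¹) ^ 2 * (1 - 2 * m * s)⁻¹), 1] a
        * Sum.elim (0 : Fin 2 → ℝ) ![-((s⁻¹) ^ 2 * (1 - 2 * m * s)⁻¹), 1] b)))⁻¹ - 1)
      =O[𝓝[>] 0] id := by
  set Q : ℝ → ℝ := fun s => -(∑ a, ∑ b, (((ω s) ^ 2)⁻¹ • (gBar σ m s + p s))⁻¹ a b
        * Sum.elim (0 : Fin 2 → ℝ) ![-((s⁻¹) ^ 2 * (1 - 2 * m * s)⁻¹), 1] a
        * Sum.elim (0 : Fin 2 → ℝ) ![-((s⁻¹) ^ 2 * (1 - 2 * m * s)⁻¹), 1] b)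
  set w : ℝ → Fin 2 ⊕ Fin 2 → ℝ := fun s => Sum.elim 0 ![0, -(1 - 2 * m * s)⁻¹]
  set y : ℝ → Fin 2 ⊕ Fin 2 → ℝ := fun s => Sum.elim 0 ![-(1 - 2 * m * s)⁻¹, s ^ 2]
  set E : ℝ → ℝ := fun s => (s ^ 2)⁻¹ * (w s ⬝ᵥ (p s *ᵥ ((gBar σ m s + p s)⁻¹ *ᵥ y s)))
  have hM := tendsto_gBar_add (σ := σ) (m := m) hp
  have hM0 : (gBar σ m 0).det ≠ 0 := by simpa [det_gBar_zero] using hσ0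
  have hunit : ∀ᶠ s in 𝓝[>] 0, IsUnit (gBar σ m s + p s).det :=
    (((continuous_id.matrix_det).tendsto _).comp hM).eventually_ne hM0 |>.mono
      fun _ h => isUnit_iff_ne_zero.2 h
  have hQ : ∀ᶠ s in 𝓝[>] 0, Q s = (ω s / s) ^ 2 * ((1 - 2 * m * s)⁻¹ + E s) := by
    filter_upwards [self_mem_nhdsWithin, eventually_one_sub_mul_ne_zero m,
      eventually_ne_zero_of_isBigO hω, hunit] with s (hs : 0 < s) hhs hωs hus
    exact inv_lapse_sq_eq hσ hs.ne' hhs hωs hus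
  have hE : E =O[𝓝[>] 0] id := by
    have hzero : (fun _ : ℝ => (0 : Fin 2 → ℝ)) =O[𝓝[>] 0] fun _ => (1 : ℝ) := isBigO_zero _ _
    refine isBigO_inv_sq_mul_dotProduct_mulVec hp
      (hzero.sumElim (isBigO_one_of_continuousAt (by fun_prop (disch := norm_num)))) ?_
    simpa using IsBigO.mulVec (fun a b => ((tendsto_pi_nhds.1 (tendsto_pi_nhds.1
      (hM.matrix_inv hM0) a) b).isBigO_one ℝ))
      (hzero.sumElim (isBigO_one_of_continuousAt (by fun_prop (disch := norm_num))))
  have hω2 : (fun s => (ω s / s) ^ 2 - 1) =O[𝓝[>] 0] id := by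
    simpa using (differentiableAt_pow 2).isBigO_comp_sub hω tendsto_id_nhdsGT_zero
  have hQ1 : (fun s => Q s - 1) =O[𝓝[>] 0] id := by
    have hbdd := ((tendsto_div_id_of_isBigO hω).pow 2).isBigO_one ℝ
    refine ((isBigO_mul_of_isBigO_one hbdd ((isBigO_inv_one_sub_mul_sub_one m).add hE)).add
      hω2).congr' ?_ EventuallyEq.rfl
    filter_upwards [hQ] with s hs
    rw [hs]
    ring
  have hsqrt : DifferentiableAt ℝ (fun x : ℝ => (√x)⁻¹) 1 := by fun_prop (disch := norm_num)
  have := hsqrt.isBigO_comp_sub hQ1 tendsto_id_nhdsGT_zero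
  simp only [Real.sqrt_one, inv_one] at this
  exact this

theorem isBigO_shift (hp : ∀ a b, (fun s => p s a b) =O[𝓝[>] 0] (· ^ 3))
    (hω : (fun s => ω s / s - 1) =O[𝓝[>] 0] id)
    {c : ℝ → Fin 2 → ℝ} {K : ℝ} (hc : ∀ s A, |c s A| ≤ K * s) (x : ℝ) :
    (fun s => ∑ a, ∑ b, (((ω s) ^ 2)⁻¹ • (gBar σ m s + p s)) a b
      * Sum.elim (0 : Fin 2 → ℝ) ![0, 1] a
      * Sum.elim (c s) ![-x * s ^ 2, -x * (1 - 2 * m * s)⁻¹] b) =O[𝓝[>] 0] id := by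
  have hbdd := (((tendsto_div_id_of_isBigO hω).pow 2).inv₀ (by norm_num)).isBigO_one ℝ
  have hp' := isBigO_inv_sq_mul_dotProduct_mulVec hp
    (isBigO_const_one ℝ (Sum.elim (0 : Fin 2 → ℝ) ![0, 1]) _) (isBigO_one_frame hc x m)
  refine (isBigO_mul_of_isBigO_one hbdd hp').congr' ?_ EventuallyEq.rfl
  filter_upwards [self_mem_nhdsWithin, eventually_one_sub_mul_ne_zero m,
    eventually_ne_zero_of_isBigO hω] with s (hs : 0 < s) hhs hωs
  have hq : 0 * (-x * (1 - 2 * m * s)⁻¹) + 1 * (-x * s ^ 2)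
      - s ^ 2 * (1 - 2 * m * s) * 1 * (-x * (1 - 2 * m * s)⁻¹) = 0 := by
    field_simp
    ring
  rw [sum_sum_smul_add_mul_mul, sumElim_dotProduct_gBar_mulVec_sumElim, zero_dotProduct, hq]
  field_simp
  ring

theorem isBigO_induced_metric_sub (hp : ∀ a b, (fun s => p s a b) =O[𝓝[>] 0] (· ^ 3))
    (hω : (fun s => ω s / s - 1) =O[𝓝[>] 0] id)
    {c₁ c₂ : ℝ → Fin 2 → ℝ} {K : ℝ}
    (hc₁ : ∀ s A, |c₁ s A| ≤ K * s) (hc₂ : ∀ s A, |c₂ s A| ≤ K * s) {x₁ x₂ δ : ℝ}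
    (hchart : ∀ s, 0 < s → (∑ A, ∑ B, σ A B * c₁ s A * c₂ s B) * (s⁻¹) ^ 2 + x₁ * x₂ = δ) :
    (fun s => ∑ a, ∑ b, (((ω s) ^ 2)⁻¹ • (gBar σ m s + p s)) a b
      * Sum.elim (c₁ s) ![-x₁ * s ^ 2, -x₁ * (1 - 2 * m * s)⁻¹] a
      * Sum.elim (c₂ s) ![-x₂ * s ^ 2, -x₂ * (1 - 2 * m * s)⁻¹] b - δ) =O[𝓝[>] 0] id := by
  have hinv := ((tendsto_div_id_of_isBigO hω).pow 2).inv₀ (by norm_num)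
  have hinv1 : (fun s => ((ω s / s) ^ 2)⁻¹ - 1) =O[𝓝[>] 0] id := by
    have : DifferentiableAt ℝ (fun x : ℝ => (x ^ 2)⁻¹) 1 := by fun_prop (disch := norm_num)
    simpa using this.isBigO_comp_sub hω tendsto_id_nhdsGT_zero
  have hp' := isBigO_inv_sq_mul_dotProduct_mulVec hp (isBigO_one_frame hc₁ x₁ m)
    (isBigO_one_frame hc₂ x₂ m)
  refine ((hinv1.const_mul_left δ).add (isBigO_mul_of_isBigO_one (hinv.isBigO_one ℝ)
    (((isBigO_inv_one_sub_mul_sub_one m).const_mul_left (x₁ * x₂)).add hp'))).congr' ?_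
    EventuallyEq.rfl
  filter_upwards [self_mem_nhdsWithin, eventually_one_sub_mul_ne_zero m,
    eventually_ne_zero_of_isBigO hω] with s (hs : 0 < s) hhs hωs
  have hσc : c₁ s ⬝ᵥ (σ *ᵥ c₂ s) = (δ - x₁ * x₂) * s ^ 2 := by
    rw [← hchart s hs, sum_sum_mul_mul_eq_dotProduct_mulVec]
    field_simp
    ring
  rw [sum_sum_smul_add_mul_mul, sumElim_dotProduct_gBar_mulVec_sumElim, hσc]
  field_simp
  ring

end Schwarzschild

theorem stmt16_general (m K : ℝ)
    (σ : Matrix (Fin 2) (Fin 2) ℝ) (hσ : σ.PosDef)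
    (p : ℝ → Matrix (Fin 2 ⊕ Fin 2) (Fin 2 ⊕ Fin 2) ℝ)
    (hp : ∀ s a b, |p s a b| ≤ K * s^3)
    (ω : ℝ → ℝ) (hω : ∀ s, |ω s - s| ≤ K * s^4)
    (c : ℝ → Fin 3 → Fin 2 → ℝ) (hc : ∀ s i A, |c s i A| ≤ K * s)
    (xhat : Fin 3 → ℝ)
    (hchart : ∀ s i j, 0 < s →
      (∑ A, ∑ B, σ A B * c s i A * c s j B) * (s⁻¹)^2 + xhat i * xhat j
        = if i = j then 1 else 0)
    (gbar : ℝ → Matrix (Fin 2 ⊕ Fin 2) (Fin 2 ⊕ Fin 2) ℝ)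
    (hgbar : ∀ s, gbar s = Matrix.fromBlocks σ 0 0
      !![0, 1; 1, -(s^2 * (1 - 2*m*s))])
    (G : ℝ → Matrix (Fin 2 ⊕ Fin 2) (Fin 2 ⊕ Fin 2) ℝ)
    (hG : ∀ s, G s = ((ω s)^2)⁻¹ • (gbar s + p s))
    (X : ℝ → Fin 3 → (Fin 2 ⊕ Fin 2) → ℝ)
    (hX : ∀ s i, X s i = Sum.elim (fun A => c s i A)
      ![-(xhat i) * s^2, -(xhat i) * (1 - 2*m*s)⁻¹])
    (et : (Fin 2 ⊕ Fin 2) → ℝ) (het : et = Sum.elim (0 : Fin 2 → ℝ) ![0, 1])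
    (dt : ℝ → (Fin 2 ⊕ Fin 2) → ℝ)
    (hdt : ∀ s, dt s = Sum.elim (0 : Fin 2 → ℝ)
      ![-((s⁻¹)^2 * (1 - 2*m*s)⁻¹), 1]) :
    ∃ s₀ > (0:ℝ), ∃ C > (0:ℝ), ∀ s, 0 < s → s < s₀ →
      (∑ a, ∑ b, G s a b * et a * et b) < 0 ∧
      |(Real.sqrt (-(∑ a, ∑ b, (G s)⁻¹ a b * dt s a * dt s b)))⁻¹ - 1| ≤ C * s ∧
      (∀ i, |∑ a, ∑ b, G s a b * et a * X s i b| ≤ C * s) ∧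
      (∀ i j, |(∑ a, ∑ b, G s a b * X s i a * X s j b)
          - (if i = j then 1 else 0)| ≤ C * s) := by
  have hp3 : ∀ a b, (fun s => p s a b) =O[𝓝[>] 0] (· ^ 3) :=
    fun a b => isBigO_pow_of_abs_le (hp · a b)
  have hr := isBigO_div_id_sub_one hω
  subst het
  obtain rfl : G = fun s => ((ω s) ^ 2)⁻¹ • (gBar σ m s + p s) :=
    funext fun s => by rw [hG, hgbar]; rfl
  obtain rfl : X = _ := funext fun s => funext (hX s)
  obtain rfl : dt = _ := funext hdt
  obtain ⟨s₀, hs₀, C, hC, H⟩ := exists_forall_of_eventually_of_isBigO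
    (eventually_timelike m hp3 hr)
    ((isBigO_lapse_sub_one m hp3 hr (isHermitian_iff_isSymm.1 hσ.isHermitian)
      hσ.det_pos.ne').prod_left
      ((isBigO_pi.2 fun i => isBigO_shift m hp3 hr (hc · i) (xhat i)).prod_left
        (isBigO_pi.2 fun i => isBigO_pi.2 fun j =>
          isBigO_induced_metric_sub m hp3 hr (hc · i) (hc · j) (hchart · i j))))
  refine ⟨s₀, hs₀, C, hC, fun s hs hss => ?_⟩
  obtain ⟨hneg, hF⟩ := H s hs hss
  have hF₂ := (norm_snd_le _).trans hF
  exact ⟨hneg, (norm_fst_le _).trans hF,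
    fun i => (norm_le_pi_norm _ i).trans ((norm_fst_le _).trans hF₂),
    fun i j => (norm_le_pi_norm _ j).trans
      ((norm_le_pi_norm _ i).trans ((norm_snd_le _).trans hF₂))⟩

/-- Lemma 5.2 of the paper (pointwise, in the coordinate frame
`(∂_{y¹},∂_{y²},∂_s,∂_v)` indexed by `Fin 2 ⊕ Fin 2`).  For the asymptotically
Schwarzschild metric `G = ω⁻²(ḡ + p)` with `ω = s(1+O(s³))` and `p = O(s³)`,
in the coordinates `t = v + r_*`, `x^i` (so `∂_t = ∂_v`,
`∂_{x^i} = (x^i/r)(-h⁻¹∂_v - s²∂_s) + (∂y^A/∂x^i)∂_{y^A}` with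
`∂y^A/∂x^i = O(s)`, `dt = dv - s⁻²h⁻¹ds`):  `∂_t` is timelike for small `s`;
the lapse `α̃ = (-G(∇t,∇t))^{-1/2}` of the time function `t` satisfies
`α̃ = 1+O(s)`; the shift satisfies `β_i = G(∂_t,∂_{x^i}) = O(s)`; and the
induced metric on the slices satisfies `G_{ij} = δ_{ij} + O(s)`. -/
theorem stmt16 (m K : ℝ) (hm : 0 < m) (hK : 0 ≤ K)
    (σ : Matrix (Fin 2) (Fin 2) ℝ) (hσ : σ.PosDef)
    (p : ℝ → Matrix (Fin 2 ⊕ Fin 2) (Fin 2 ⊕ Fin 2) ℝ)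
    (hp : ∀ s a b, |p s a b| ≤ K * s^3)
    (ω : ℝ → ℝ) (hω : ∀ s, |ω s - s| ≤ K * s^4)
    (c : ℝ → Fin 3 → Fin 2 → ℝ) (hc : ∀ s i A, |c s i A| ≤ K * s)
    (xhat : Fin 3 → ℝ) (hxhat : ∑ i, xhat i ^ 2 = 1)
    (hchart : ∀ s i j, 0 < s →
      (∑ A, ∑ B, σ A B * c s i A * c s j B) * (s⁻¹)^2 + xhat i * xhat j
        = if i = j then 1 else 0)
    (gbar : ℝ → Matrix (Fin 2 ⊕ Fin 2) (Fin 2 ⊕ Fin 2) ℝ)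
    (hgbar : ∀ s, gbar s = Matrix.fromBlocks σ 0 0
      !![0, 1; 1, -(s^2 * (1 - 2*m*s))])
    (G : ℝ → Matrix (Fin 2 ⊕ Fin 2) (Fin 2 ⊕ Fin 2) ℝ)
    (hG : ∀ s, G s = ((ω s)^2)⁻¹ • (gbar s + p s))
    (X : ℝ → Fin 3 → (Fin 2 ⊕ Fin 2) → ℝ)
    (hX : ∀ s i, X s i = Sum.elim (fun A => c s i A)
      ![-(xhat i) * s^2, -(xhat i) * (1 - 2*m*s)⁻¹])
    (et : (Fin 2 ⊕ Fin 2) → ℝ) (het : et = Sum.elim (0 : Fin 2 → ℝ) ![0, 1])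
    (dt : ℝ → (Fin 2 ⊕ Fin 2) → ℝ)
    (hdt : ∀ s, dt s = Sum.elim (0 : Fin 2 → ℝ)
      ![-((s⁻¹)^2 * (1 - 2*m*s)⁻¹), 1]) :
    ∃ s₀ > (0:ℝ), ∃ C > (0:ℝ), ∀ s, 0 < s → s < s₀ →
      (∑ a, ∑ b, G s a b * et a * et b) < 0 ∧
      |(Real.sqrt (-(∑ a, ∑ b, (G s)⁻¹ a b * dt s a * dt s b)))⁻¹ - 1| ≤ C * s ∧
      (∀ i, |∑ a, ∑ b, G s a b * et a * X s i b| ≤ C * s) ∧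
      (∀ i j, |(∑ a, ∑ b, G s a b * X s i a * X s j b)
          - (if i = j then 1 else 0)| ≤ C * s) :=
  stmt16_general m K σ hσ p hp ω hω c hc xhat hchart gbar hgbar G hG X hX et het dt hdt
end
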